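/- Let $(a_{ij})_{1\le i,j\le n}$ be a real $n \times n$ array satisfying $a_{ik} - a_{jk} - a_{il} + a_{jl} \in [-N, N]$ for all $1 \le i,j,k,l \le n$. Let $S_\pi = \sum_{i=1}^n a_{i\pi(i)}$ for a uniformly random permutation $\pi$. Then $\mathrm{Var}(S_\pi) \le n N^2$, and consequently for any $C > 0$, $\P\big(|S_\pi - \E S_\pi| > (C/4)\sqrt{n} N\big) \le 16/C^2$. -/

import Mathlib

open Finset
open scoped Classical

variable {n : ℕ}

lemma card_ne_two (i j : Fin n) (hij : i ≠ j) :
    Fintype.card {x : Fin n // x ≠ i ∧ x ≠ j} = n - 2 := by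
  rw [Fintype.card_subtype]
  have h : (univ.filter (fun x : Fin n => x ≠ i ∧ x ≠ j)) = univ \ {i, j} := by
    ext x; simp [not_or]
  rw [h, card_sdiff_of_subset (subset_univ _), card_univ, Fintype.card_fin]
  congr 1
  rw [card_insert_of_notMem (by simpa using hij), card_singleton]

lemma card_fix_two (i j : Fin n) (hij : i ≠ j) :
    (univ.filter (fun π : Equiv.Perm (Fin n) => π i = i ∧ π j = j)).card
      = (n - 2).factorial := by
  have e1 : {f : Equiv.Perm (Fin n) // f i = i ∧ f j = j}
      ≃ Equiv.Perm {x : Fin n // x ≠ i ∧ x ≠ j} := by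
    refine (Equiv.subtypeEquivRight ?_).trans
      (Equiv.Perm.subtypeEquivSubtypePerm (fun x : Fin n => x ≠ i ∧ x ≠ j)).symm
    intro f
    constructor
    · rintro ⟨h1, h2⟩ x hx
      rcases not_and_or.mp hx with h | h
      · rw [not_not.mp h, h1]
      · rw [not_not.mp h, h2]
    · intro h
      exact ⟨h i (by simp), h j (by simp)⟩
  rw [← Fintype.card_subtype, Fintype.card_congr e1, Fintype.card_perm, card_ne_two i j hij]

lemma exists_perm_two (i j k l : Fin n) (hij : i ≠ j) (hkl : k ≠ l) :
    ∃ σ : Equiv.Perm (Fin n), σ i = k ∧ σ j = l := by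
  set τ := Equiv.swap i k with hτ
  have hτi : τ i = k := Equiv.swap_apply_left i k
  have hm : τ j ≠ k := by
    rw [← hτi]; exact fun h => hij (τ.injective h.symm)
  refine ⟨τ.trans (Equiv.swap (τ j) l), ?_, ?_⟩
  · simp only [Equiv.trans_apply, hτi]
    exact Equiv.swap_apply_of_ne_of_ne hm.symm hkl
  · simp [Equiv.trans_apply]

lemma card_fiber (i j k l : Fin n) (hij : i ≠ j) (hkl : k ≠ l) :
    (univ.filter (fun π : Equiv.Perm (Fin n) => π i = k ∧ π j = l)).card
      = (n - 2).factorial := by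
  obtain ⟨σ, hσi, hσj⟩ := exists_perm_two i j k l hij hkl
  rw [← card_fix_two i j hij]
  apply Finset.card_bij (fun π _ => π.trans σ.symm)
  · intro π hπ
    simp only [mem_filter, mem_univ, true_and] at hπ ⊢
    constructor
    · rw [Equiv.trans_apply, hπ.1, ← hσi, Equiv.symm_apply_apply]
    · rw [Equiv.trans_apply, hπ.2, ← hσj, Equiv.symm_apply_apply]
  · intro π1 h1 π2 h2 h
    have := congrArg (fun e => e.trans σ) h
    simpa [Equiv.trans_assoc] using this
  · intro ρ hρ
    simp only [mem_filter, mem_univ, true_and] at hρ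
    refine ⟨ρ.trans σ, ?_, ?_⟩
    · simp only [mem_filter, mem_univ, true_and, Equiv.trans_apply, hρ.1, hρ.2, hσi, hσj,
        and_self]
    · simp [Equiv.trans_assoc]

lemma sum_offDiag_eq (g : Fin n → Fin n → ℝ) :
    ∑ p ∈ (univ : Finset (Fin n)).offDiag, g p.1 p.2
      = (∑ k, ∑ l, g k l) - ∑ k, g k k := by
  have h2 : (univ : Finset (Fin n)).diag ∪ univ.offDiag = univ ×ˢ univ :=
    diag_union_offDiag _
  have h4 : ∑ p ∈ (univ : Finset (Fin n)).diag, g p.1 p.2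
      + ∑ p ∈ (univ : Finset (Fin n)).offDiag, g p.1 p.2 = ∑ k, ∑ l, g k l := by
    rw [← Finset.sum_union (disjoint_diag_offDiag _), h2, Finset.sum_product]
  have h3 : ∑ p ∈ (univ : Finset (Fin n)).diag, g p.1 p.2 = ∑ k, g k k := by
    apply Finset.sum_nbij' (fun p => p.1) (fun k => (k, k)) <;> simp [Finset.mem_diag]
  rw [h3] at h4; linarith

lemma sum_perm_pair (i j : Fin n) (hij : i ≠ j) (g : Fin n → Fin n → ℝ) :
    ∑ π : Equiv.Perm (Fin n), g (π i) (π j)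
      = (n - 2).factorial * ((∑ k, ∑ l, g k l) - ∑ k, g k k) := by
  rw [← sum_offDiag_eq]
  rw [← Finset.sum_fiberwise_of_maps_to
    (g := fun π : Equiv.Perm (Fin n) => ((π i, π j) : Fin n × Fin n))
    (t := (univ : Finset (Fin n)).offDiag)
    (fun π _ => Finset.mem_offDiag.mpr ⟨mem_univ _, mem_univ _, fun h => hij (π.injective h)⟩)
    (fun π => g (π i) (π j))]
  rw [Finset.mul_sum]
  refine Finset.sum_congr rfl fun p hp => ?_
  obtain ⟨-, -, hp12⟩ := Finset.mem_offDiag.mp hp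
  have : ∀ π ∈ univ.filter
      (fun π : Equiv.Perm (Fin n) => ((π i, π j) : Fin n × Fin n) = p),
      g (π i) (π j) = g p.1 p.2 := by
    intro π hπ
    simp only [mem_filter, Prod.ext_iff] at hπ
    rw [hπ.2.1, hπ.2.2]
  rw [Finset.sum_congr rfl this, Finset.sum_const, nsmul_eq_mul]
  congr 1
  have : (univ.filter (fun π : Equiv.Perm (Fin n) => ((π i, π j) : Fin n × Fin n) = p))
      = univ.filter (fun π : Equiv.Perm (Fin n) => π i = p.1 ∧ π j = p.2) := by
    ext π; simp [Prod.ext_iff]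
  rw [this, card_fiber i j p.1 p.2 hij hp12]

lemma sum_perm_single (hn : 2 ≤ n) (i : Fin n) (f : Fin n → ℝ) :
    ∑ π : Equiv.Perm (Fin n), f (π i) = (n - 1).factorial * ∑ k, f k := by
  obtain ⟨j, hj⟩ := Fintype.exists_ne_of_one_lt_card
    (by simpa using (by omega : 1 < n)) i
  have h := sum_perm_pair i j (Ne.symm hj) (fun k _ => f k)
  simp only [Finset.sum_const, card_univ, Fintype.card_fin, nsmul_eq_mul] at h
  rw [h]
  have h1 : (n - 1).factorial = (n - 2).factorial * (n - 1) := by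
    have h2 : n - 1 = (n - 2) + 1 := by omega
    rw [h2, Nat.factorial_succ, mul_comm]
  rw [h1]
  push_cast [Nat.cast_sub (by omega : 1 ≤ n)]
  rw [← Finset.mul_sum]
  ring

open scoped Classical in
theorem variance_bound_and_chebyshev
    (n : ℕ) (hn : 2 ≤ n) (a : Fin n → Fin n → ℝ) (N : ℝ)
    (hbdd : ∀ i j k l : Fin n, a i k - a j k - a i l + a j l ∈ Set.Icc (-N) N)
    (C : ℝ) (hC : 0 < C) :
    (∑ π : Equiv.Perm (Fin n),
        ((∑ i, a i (π i)) -
          (∑ π' : Equiv.Perm (Fin n), ∑ i, a i (π' i)) / (n.factorial : ℝ)) ^ 2) /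
      (n.factorial : ℝ) ≤ (n : ℝ) * N ^ 2 ∧
    ((Finset.univ.filter (fun π : Equiv.Perm (Fin n) =>
        (C / 4) * Real.sqrt n * N <
          |(∑ i, a i (π i)) -
            (∑ π' : Equiv.Perm (Fin n), ∑ i, a i (π' i)) / (n.factorial : ℝ)|)).card : ℝ) /
      (n.factorial : ℝ) ≤ 16 / C ^ 2 := by
  have hnR : (2:ℝ) ≤ (n:ℝ) := by exact_mod_cast hn
  have hn0 : (0:ℝ) < (n:ℝ) := by linarith
  have hfact_pos : (0:ℝ) < (n.factorial : ℝ) := by exact_mod_cast n.factorial_pos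
  have hN : 0 ≤ N := by
    have h0 := hbdd ⟨0, by omega⟩ ⟨0, by omega⟩ ⟨0, by omega⟩ ⟨0, by omega⟩
    rw [Set.mem_Icc] at h0
    obtain ⟨h1, h2⟩ := h0; linarith
  set T : ℝ := ∑ k, ∑ l, a k l with hT
  set b : Fin n → Fin n → ℝ := fun i j =>
    a i j - (∑ k, a k j) / n - (∑ l, a i l) / n + T / (n:ℝ)^2 with hbdef
  have hS : ∀ i j, ∑ k, ∑ l, (a i j - a k j - a i l + a k l)
      = (n:ℝ)^2 * a i j - n * (∑ k, a k j) - n * (∑ l, a i l) + T := by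
    intro i j
    have e1 : ∀ k : Fin n, ∑ l, (a i j - a k j - a i l + a k l)
        = (n:ℝ) * a i j - (n:ℝ) * a k j - (∑ l, a i l) + ∑ l, a k l := by
      intro k
      rw [Finset.sum_add_distrib, Finset.sum_sub_distrib, Finset.sum_sub_distrib,
        Finset.sum_const, Finset.sum_const, card_univ, Fintype.card_fin,
        nsmul_eq_mul, nsmul_eq_mul]
    rw [Finset.sum_congr rfl fun k _ => e1 k]
    rw [Finset.sum_add_distrib, Finset.sum_sub_distrib, Finset.sum_sub_distrib,
      Finset.sum_const, Finset.sum_const, card_univ, Fintype.card_fin,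
      nsmul_eq_mul, nsmul_eq_mul, ← Finset.mul_sum, ← hT]
    ring
  have hbeq : ∀ i j, b i j = (∑ k, ∑ l, (a i j - a k j - a i l + a k l)) / (n:ℝ)^2 := by
    intro i j
    rw [hS]
    simp only [hbdef]
    field_simp
  have esum : ∀ (x : Fin n), ∑ k : Fin n, (if k = x then (0:ℝ) else 1) = (n:ℝ) - 1 := by
    intro x
    have e : ∀ k : Fin n, (if k = x then (0:ℝ) else 1) = 1 - (if k = x then 1 else 0) := by
      intro k; split <;> ring
    rw [Finset.sum_congr rfl fun k _ => e k, Finset.sum_sub_distrib, Finset.sum_const,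
      card_univ, Fintype.card_fin, Finset.sum_ite_eq' univ x (fun _ => (1:ℝ)),
      if_pos (mem_univ x), nsmul_eq_mul, mul_one]
  have hb : ∀ i j, |b i j| ≤ ((n:ℝ)-1)^2 / (n:ℝ)^2 * N := by
    intro i j
    rw [hbeq i j, abs_div, abs_of_pos (by positivity : (0:ℝ) < (n:ℝ)^2),
      div_le_iff₀ (by positivity : (0:ℝ) < (n:ℝ)^2)]
    have step1 : |∑ k, ∑ l, (a i j - a k j - a i l + a k l)|
        ≤ ∑ k, ∑ l, |a i j - a k j - a i l + a k l| := by
      refine (Finset.abs_sum_le_sum_abs _ _).trans ?_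
      exact Finset.sum_le_sum fun k _ => Finset.abs_sum_le_sum_abs _ _
    have step2 : ∑ k, ∑ l, |a i j - a k j - a i l + a k l|
        ≤ ∑ k : Fin n, ∑ l : Fin n,
          (if k = i then (0:ℝ) else 1) * ((if l = j then (0:ℝ) else 1) * N) := by
      refine Finset.sum_le_sum fun k _ => Finset.sum_le_sum fun l _ => ?_
      by_cases hk : k = i
      · have h0 : a i j - a k j - a i l + a k l = 0 := by rw [hk]; ring
        rw [h0, abs_zero, if_pos hk, zero_mul]
      · by_cases hl : l = j
        · have h0 : a i j - a k j - a i l + a k l = 0 := by rw [hl]; ring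
          rw [h0, abs_zero]
          simp [hk, hl]
        · rw [if_neg hk, if_neg hl, one_mul, one_mul]
          exact abs_le.mpr (Set.mem_Icc.mp (hbdd i k j l))
    have step3 : ∑ k : Fin n, ∑ l : Fin n,
        (if k = i then (0:ℝ) else 1) * ((if l = j then (0:ℝ) else 1) * N)
        = ((n:ℝ) - 1) * (((n:ℝ) - 1) * N) := by
      rw [Finset.sum_congr rfl fun k (_ : k ∈ univ) => by
        rw [← Finset.mul_sum, ← Finset.sum_mul, esum j]]
      rw [← Finset.sum_mul, esum i]
    calc |∑ k, ∑ l, (a i j - a k j - a i l + a k l)|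
        ≤ ((n:ℝ) - 1) * (((n:ℝ) - 1) * N) := by
          rw [← step3]; exact step1.trans step2
      _ = ((n:ℝ)-1)^2 / (n:ℝ)^2 * N * (n:ℝ)^2 := by field_simp
  have hrow : ∀ i, ∑ k, b i k = 0 := by
    intro i
    simp only [hbdef]
    rw [Finset.sum_add_distrib, Finset.sum_sub_distrib, Finset.sum_sub_distrib,
      ← Finset.sum_div, Finset.sum_const, Finset.sum_const, card_univ, Fintype.card_fin,
      nsmul_eq_mul, nsmul_eq_mul]
    have e1 : ∑ k, ∑ m : Fin n, a m k = T := by rw [hT]; exact Finset.sum_comm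
    rw [e1]
    field_simp
    ring
  have hcol : ∀ k, ∑ i, b i k = 0 := by
    intro k
    simp only [hbdef]
    rw [Finset.sum_add_distrib, Finset.sum_sub_distrib, Finset.sum_sub_distrib,
      ← Finset.sum_div, Finset.sum_const, card_univ, Fintype.card_fin, nsmul_eq_mul,
      ← Finset.sum_div, ← hT]
    field_simp
    rw [Finset.sum_const, card_univ, Fintype.card_fin, nsmul_eq_mul]
    field_simp
    ring
  have hmean : (∑ π' : Equiv.Perm (Fin n), ∑ i, a i (π' i))
      = ((n-1).factorial : ℝ) * T := by
    rw [Finset.sum_comm]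
    calc ∑ i, ∑ π' : Equiv.Perm (Fin n), a i (π' i)
        = ∑ i, ((n-1).factorial : ℝ) * ∑ k, a i k :=
          Finset.sum_congr rfl fun i _ => sum_perm_single hn i (a i)
      _ = ((n-1).factorial : ℝ) * T := by rw [← Finset.mul_sum, hT]
  have hED : (∑ π' : Equiv.Perm (Fin n), ∑ i, a i (π' i)) / (n.factorial : ℝ)
      = T / n := by
    rw [hmean]
    have hnf : (n.factorial : ℝ) = n * (n-1).factorial := by
      exact_mod_cast (Nat.mul_factorial_pred (by omega : n ≠ 0)).symm
    have hne : ((n-1).factorial : ℝ) ≠ 0 := by positivity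
    rw [hnf]
    field_simp
  have hXeq : ∀ π : Equiv.Perm (Fin n),
      (∑ i, a i (π i)) - (∑ π' : Equiv.Perm (Fin n), ∑ i, a i (π' i)) / (n.factorial : ℝ)
        = ∑ i, b i (π i) := by
    intro π
    rw [hED]
    simp only [hbdef]
    rw [Finset.sum_add_distrib, Finset.sum_sub_distrib, Finset.sum_sub_distrib]
    have hc : ∑ i, (∑ k, a k (π i)) / (n:ℝ) = T / n := by
      rw [← Finset.sum_div, Equiv.sum_comp π (fun j => ∑ k, a k j)]
      congr 1
      rw [hT]; exact Finset.sum_comm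
    have hr : ∑ i, (∑ l, a i l) / (n:ℝ) = T / n := by
      rw [← Finset.sum_div, ← hT]
    have ht : ∑ _i : Fin n, T / (n:ℝ)^2 = T / n := by
      rw [Finset.sum_const, card_univ, Fintype.card_fin, nsmul_eq_mul]
      field_simp
    rw [hc, hr, ht]
    ring
  set B : ℝ := ∑ i, ∑ k, b i k * b i k with hB
  set F : Fin n → Fin n → ℝ :=
    fun i j => ∑ π : Equiv.Perm (Fin n), b i (π i) * b j (π j) with hF
  set G : Fin n → Fin n → ℝ := fun i j => ∑ k, b i k * b j k with hG
  have hGrow : ∀ i, ∑ j, G i j = 0 := by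
    intro i
    simp only [hG]
    rw [Finset.sum_comm]
    have e : ∀ k : Fin n, ∑ j, b i k * b j k = 0 := by
      intro k; rw [← Finset.mul_sum, hcol k, mul_zero]
    rw [Finset.sum_congr rfl fun k _ => e k, Finset.sum_const, smul_zero]
  have hGdiagsum : ∑ i, G i i = B := rfl
  have hoffG : ∑ p ∈ (univ : Finset (Fin n)).offDiag, G p.1 p.2 = -B := by
    rw [sum_offDiag_eq G, Finset.sum_congr rfl fun i (_ : i ∈ univ) => hGrow i,
      Finset.sum_const, smul_zero, hGdiagsum]
    ring
  have hFdiag : ∀ i, F i i = ((n-1).factorial : ℝ) * ∑ k, b i k * b i k := by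
    intro i
    simp only [hF]
    exact sum_perm_single hn i (fun k => b i k * b i k)
  have hFoff : ∀ p ∈ (univ : Finset (Fin n)).offDiag,
      F p.1 p.2 = -(((n-2).factorial : ℝ) * G p.1 p.2) := by
    intro p hp
    obtain ⟨-, -, hp12⟩ := Finset.mem_offDiag.mp hp
    have e1 := sum_perm_pair p.1 p.2 hp12 (fun k l => b p.1 k * b p.2 l)
    have e2 : ∑ k, ∑ l, b p.1 k * b p.2 l = 0 := by
      rw [← Finset.sum_mul_sum, hrow p.1, zero_mul]
    simp only [hF, hG]
    rw [e1, e2]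
    ring
  have key : ∑ π : Equiv.Perm (Fin n), (∑ i, b i (π i))^2
      = (((n-1).factorial + (n-2).factorial : ℕ) : ℝ) * B := by
    have e1 : ∑ π : Equiv.Perm (Fin n), (∑ i, b i (π i))^2 = ∑ i, ∑ j, F i j := by
      rw [Finset.sum_congr rfl fun (π : Equiv.Perm (Fin n)) _ =>
        (by rw [sq, Finset.sum_mul_sum] :
          (∑ i, b i (π i))^2 = ∑ i, ∑ j, b i (π i) * b j (π j))]
      rw [Finset.sum_comm]
      exact Finset.sum_congr rfl fun i _ => Finset.sum_comm
    have e2 : ∑ p ∈ (univ : Finset (Fin n)).offDiag, F p.1 p.2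
        = ((n-2).factorial : ℝ) * B := by
      rw [Finset.sum_congr rfl hFoff, Finset.sum_neg_distrib, ← Finset.mul_sum, hoffG]
      ring
    have e3 : ∑ i, F i i = ((n-1).factorial : ℝ) * B := by
      rw [Finset.sum_congr rfl fun i (_ : i ∈ univ) => hFdiag i, ← Finset.mul_sum]
    have e4 := sum_offDiag_eq F
    rw [e1]
    push_cast
    rw [e2, e3] at e4
    linarith
  -- bound on B
  have hBle : B ≤ (n:ℝ) * ((n:ℝ)-1) * N^2 := by
    have hpt : ∀ i k : Fin n, b i k * b i k ≤ (((n:ℝ)-1)^2/(n:ℝ)^2 * N)^2 := by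
      intro i k
      calc b i k * b i k = |b i k|^2 := by rw [sq_abs]; ring
        _ ≤ (((n:ℝ)-1)^2/(n:ℝ)^2 * N)^2 := pow_le_pow_left₀ (abs_nonneg _) (hb i k) 2
    have hsum : B ≤ (n:ℝ)^2 * (((n:ℝ)-1)^2/(n:ℝ)^2 * N)^2 := by
      calc B ≤ ∑ _i : Fin n, ∑ _k : Fin n, (((n:ℝ)-1)^2/(n:ℝ)^2 * N)^2 :=
          Finset.sum_le_sum fun i _ => Finset.sum_le_sum fun k _ => hpt i k
        _ = (n:ℝ)^2 * (((n:ℝ)-1)^2/(n:ℝ)^2 * N)^2 := by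
            rw [Finset.sum_const, Finset.sum_const, card_univ, Fintype.card_fin,
              smul_smul, nsmul_eq_mul]
            push_cast
            ring
    refine hsum.trans ?_
    have h3 : ((n:ℝ)-1)^3 ≤ (n:ℝ)^3 := pow_le_pow_left₀ (by linarith) (by linarith) 3
    have expand : (n:ℝ)^2 * (((n:ℝ)-1)^2/(n:ℝ)^2 * N)^2
        = ((n:ℝ)-1)^4 * N^2 / (n:ℝ)^2 := by
      field_simp
    rw [expand, div_le_iff₀ (by positivity : (0:ℝ) < (n:ℝ)^2)]
    nlinarith [mul_le_mul_of_nonneg_right h3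
      (mul_nonneg (by linarith : (0:ℝ) ≤ (n:ℝ)-1) (sq_nonneg N))]
  have hfn : (n-1).factorial + (n-2).factorial = n * (n-2).factorial := by
    have h2 : n - 1 = (n-2)+1 := by omega
    have h3 : (n - 2) + 2 = n := by omega
    calc (n-1).factorial + (n-2).factorial
        = ((n-2)+1) * (n-2).factorial + (n-2).factorial := by rw [h2, Nat.factorial_succ]
      _ = ((n-2)+2) * (n-2).factorial := by ring
      _ = n * (n-2).factorial := by rw [h3]
  have hfn2 : n.factorial = n * (n-1) * (n-2).factorial := by
    have e : n - 1 - 1 = n - 2 := by omega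
    calc n.factorial = n * (n-1).factorial := (Nat.mul_factorial_pred (by omega)).symm
      _ = n * ((n-1) * (n-1-1).factorial) := by
          rw [Nat.mul_factorial_pred (by omega : n - 1 ≠ 0)]
      _ = n * (n-1) * (n-2).factorial := by rw [e, mul_assoc]
  have part1 : (∑ π : Equiv.Perm (Fin n),
      ((∑ i, a i (π i)) -
        (∑ π' : Equiv.Perm (Fin n), ∑ i, a i (π' i)) / (n.factorial : ℝ)) ^ 2) /
      (n.factorial : ℝ) ≤ (n : ℝ) * N ^ 2 := by
    rw [Finset.sum_congr rfl fun (π : Equiv.Perm (Fin n)) _ => by rw [hXeq π]]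
    rw [key, div_le_iff₀ hfact_pos]
    calc (((n-1).factorial + (n-2).factorial : ℕ) : ℝ) * B
        = (n:ℝ) * ((n-2).factorial : ℝ) * B := by rw [hfn]; push_cast; ring
      _ ≤ (n:ℝ) * ((n-2).factorial : ℝ) * ((n:ℝ) * ((n:ℝ)-1) * N^2) := by
          have hBnn : (0:ℝ) ≤ (n:ℝ) * ((n-2).factorial : ℝ) := by positivity
          exact mul_le_mul_of_nonneg_left hBle hBnn
      _ = (n:ℝ) * N^2 * (n.factorial : ℝ) := by
          rw [hfn2]
          push_cast [Nat.cast_sub (show 1 ≤ n by omega)]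
          ring
  refine ⟨part1, ?_⟩
  have hVle : ∑ π : Equiv.Perm (Fin n),
      ((∑ i, a i (π i)) -
        (∑ π' : Equiv.Perm (Fin n), ∑ i, a i (π' i)) / (n.factorial : ℝ)) ^ 2
      ≤ (n : ℝ) * N ^ 2 * (n.factorial : ℝ) := (div_le_iff₀ hfact_pos).mp part1
  by_cases hN0 : N = 0
  · subst hN0
    have hzero : ∀ π : Equiv.Perm (Fin n),
        (∑ i, a i (π i)) -
          (∑ π' : Equiv.Perm (Fin n), ∑ i, a i (π' i)) / (n.factorial : ℝ) = 0 := by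
      intro π
      have hsum0 : ∑ π' : Equiv.Perm (Fin n),
          ((∑ i, a i (π' i)) -
            (∑ π'' : Equiv.Perm (Fin n), ∑ i, a i (π'' i)) / (n.factorial : ℝ)) ^ 2 = 0 := by
        refine le_antisymm ?_ (Finset.sum_nonneg fun π' _ => sq_nonneg _)
        calc _ ≤ (n : ℝ) * (0:ℝ) ^ 2 * (n.factorial : ℝ) := hVle
          _ = 0 := by ring
      have h := (Finset.sum_eq_zero_iff_of_nonneg
        (fun π' (_ : π' ∈ univ) => sq_nonneg _)).mp hsum0 π (mem_univ π)
      exact (pow_eq_zero_iff two_ne_zero).mp h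
    have hempty : (Finset.univ.filter (fun π : Equiv.Perm (Fin n) =>
        (C / 4) * Real.sqrt n * 0 <
          |(∑ i, a i (π i)) -
            (∑ π' : Equiv.Perm (Fin n), ∑ i, a i (π' i)) / (n.factorial : ℝ)|)) = ∅ := by
      rw [Finset.filter_eq_empty_iff]
      intro π _
      rw [hzero π]
      simp
    rw [hempty]
    simp only [Finset.card_empty, Nat.cast_zero, zero_div]
    positivity
  · have hNpos : 0 < N := lt_of_le_of_ne hN (Ne.symm hN0)
    have hsqrt : 0 < Real.sqrt n := Real.sqrt_pos.mpr hn0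
    set M : ℝ := C / 4 * Real.sqrt n * N with hM
    have hMpos : 0 < M := by rw [hM]; positivity
    set s := Finset.univ.filter (fun π : Equiv.Perm (Fin n) =>
        M < |(∑ i, a i (π i)) -
          (∑ π' : Equiv.Perm (Fin n), ∑ i, a i (π' i)) / (n.factorial : ℝ)|) with hs
    have hcard : (s.card : ℝ) * M^2 ≤ ∑ π : Equiv.Perm (Fin n),
        ((∑ i, a i (π i)) -
          (∑ π' : Equiv.Perm (Fin n), ∑ i, a i (π' i)) / (n.factorial : ℝ)) ^ 2 := by
      calc (s.card : ℝ) * M^2 = ∑ _π ∈ s, M^2 := by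
            rw [Finset.sum_const, nsmul_eq_mul]
        _ ≤ ∑ π ∈ s, ((∑ i, a i (π i)) -
            (∑ π' : Equiv.Perm (Fin n), ∑ i, a i (π' i)) / (n.factorial : ℝ)) ^ 2 := by
            refine Finset.sum_le_sum fun π hπ => ?_
            rw [hs, Finset.mem_filter] at hπ
            have h := hπ.2
            calc M^2 ≤ |(∑ i, a i (π i)) -
                (∑ π' : Equiv.Perm (Fin n), ∑ i, a i (π' i)) / (n.factorial : ℝ)| ^ 2 :=
                pow_le_pow_left₀ hMpos.le h.le 2
              _ = _ := sq_abs _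
        _ ≤ _ := Finset.sum_le_sum_of_subset_of_nonneg (Finset.filter_subset _ _)
            (fun π _ _ => sq_nonneg _)
    have hM2 : M^2 = C^2/16 * ((n:ℝ) * N^2) := by
      rw [hM, mul_pow, mul_pow, Real.sq_sqrt hn0.le]
      ring
    have h1 : (s.card : ℝ) * (C^2/16 * ((n:ℝ) * N^2))
        ≤ (n:ℝ) * N^2 * (n.factorial : ℝ) := by
      rw [← hM2]; exact hcard.trans hVle
    have hnN : (0:ℝ) < (n:ℝ) * N^2 := by positivity
    have h3 : (s.card : ℝ) * C^2 / 16 * ((n:ℝ) * N^2)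
        ≤ (n.factorial : ℝ) * ((n:ℝ) * N^2) := by
      calc (s.card : ℝ) * C^2 / 16 * ((n:ℝ) * N^2)
          = (s.card : ℝ) * (C^2/16 * ((n:ℝ) * N^2)) := by ring
        _ ≤ (n:ℝ) * N^2 * (n.factorial : ℝ) := h1
        _ = (n.factorial : ℝ) * ((n:ℝ) * N^2) := by ring
    have h2 := le_of_mul_le_mul_right h3 hnN
    rw [div_le_div_iff₀ hfact_pos (by positivity : (0:ℝ) < C^2)]
    linarith
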